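/- Let J be a Jordan superalgebra over a field of characteristic 0 with two orthogonal even idempotents e_1, e_2 (e_1·e_1 = e_1, e_2·e_2 = e_2, e_1·e_2 = 0) and an odd element f with e_1·f = (1/2) f and e_2·f = β f. Then β(2β - 1) = 0, i.e. β ∈ {0, 1/2}. -/

import Mathlib

/-- The sign `(-1)^a` for a parity `a : ZMod 2`, as an element of the field `F`. -/
def sgn (F : Type*) [Field F] (a : ZMod 2) : F := if a = 0 then 1 else -1

/-- A Jordan superalgebra structure: a `Z/2`-graded vector space `J = V 0 ⊕ V 1`
with a bilinear multiplication respecting the grading, super-commutative, and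
satisfying the graded Jordan identity. -/
structure IsJordanSuperalgebra (F : Type*) [Field F] {J : Type*} [AddCommGroup J] [Module F J]
    (mul : J →ₗ[F] J →ₗ[F] J) (V : ZMod 2 → Submodule F J) : Prop where
  decomp : DirectSum.IsInternal V
  grading : ∀ a b : ZMod 2, ∀ x ∈ V a, ∀ y ∈ V b, mul x y ∈ V (a + b)
  supercomm : ∀ a b : ZMod 2, ∀ x ∈ V a, ∀ y ∈ V b, mul x y = sgn F (a * b) • mul y x
  jordan : ∀ a b c d : ZMod 2, ∀ x ∈ V a, ∀ y ∈ V b, ∀ z ∈ V c, ∀ t ∈ V d,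
    mul (mul (mul x y) z) t
      + sgn F (b * c + b * d + c * d) • mul (mul (mul x t) z) y
      + sgn F (a * b + a * c + a * d + c * d) • mul (mul (mul y t) z) x
    = mul (mul x y) (mul z t)
      + sgn F (d * (b + c)) • mul (mul x t) (mul y z)
      + sgn F (b * c) • mul (mul x z) (mul y t)

/-!
Expand the graded Jordan identity `J(e₁, e₂, e₂, f) = 0`. Since `e₁, e₂` are even, no signs
occur, and the Peirce relations collapse it to `2αβ² f = αβ f`, where `α` is the eigenvalue of `e₁`
on `f`. With `α = 1/2` and `f ≠ 0` this forces `β (2β - 1) = 0`.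
-/

@[simp]
theorem sgn_zero (F : Type*) [Field F] : sgn F 0 = 1 := if_pos rfl

namespace IsJordanSuperalgebra

variable {F : Type*} [Field F] {J : Type*} [AddCommGroup J] [Module F J]
  {mul : J →ₗ[F] J →ₗ[F] J} {V : ZMod 2 → Submodule F J}

theorem mul_comm_of_mem_zero (hJ : IsJordanSuperalgebra F mul V) {d : ZMod 2} {x y : J}
    (hx : x ∈ V 0) (hy : y ∈ V d) : mul y x = mul x y := by
  simpa using hJ.supercomm d 0 y hy x hx

theorem jordan_of_mem_zero (hJ : IsJordanSuperalgebra F mul V) {d : ZMod 2} {x y z t : J}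
    (hx : x ∈ V 0) (hy : y ∈ V 0) (hz : z ∈ V 0) (ht : t ∈ V d) :
    mul (mul (mul x y) z) t + mul (mul (mul x t) z) y + mul (mul (mul y t) z) x
      = mul (mul x y) (mul z t) + mul (mul x t) (mul y z) + mul (mul x z) (mul y t) := by
  simpa using hJ.jordan 0 0 0 d x hx y hy z hz t ht

theorem peirce_eigenvalue_smul_eq_zero (hJ : IsJordanSuperalgebra F mul V) {d : ZMod 2}
    {e₁ e₂ f : J} {α β : F} (he₁ : e₁ ∈ V 0) (he₂ : e₂ ∈ V 0) (hf : f ∈ V d)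
    (h22 : mul e₂ e₂ = e₂) (h12 : mul e₁ e₂ = 0)
    (h1f : mul e₁ f = α • f) (h2f : mul e₂ f = β • f) :
    (α * β * (2 * β - 1)) • f = 0 := by
  have hf1 : mul f e₁ = α • f := (hJ.mul_comm_of_mem_zero he₁ hf).trans h1f
  have hf2 : mul f e₂ = β • f := (hJ.mul_comm_of_mem_zero he₂ hf).trans h2f
  have key := hJ.jordan_of_mem_zero he₁ he₂ he₂ hf
  simp only [h12, h1f, h2f, h22, hf1, hf2, map_zero, LinearMap.zero_apply, map_smul,
    LinearMap.smul_apply, smul_smul, smul_zero, zero_add, add_zero] at key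
  rw [← sub_eq_zero, ← add_smul, ← sub_smul] at key
  rw [← key]
  congr 1
  ring

end IsJordanSuperalgebra

theorem second_idempotent_eigenvalue_general (F : Type*) [Field F] [CharZero F] {J : Type*}
    [AddCommGroup J] [Module F J]
    (mul : J →ₗ[F] J →ₗ[F] J) (V : ZMod 2 → Submodule F J)
    (hJ : IsJordanSuperalgebra F mul V)
    (e₁ e₂ f : J) (β : F)
    (he₁ : e₁ ∈ V 0) (he₂ : e₂ ∈ V 0) (hf : f ∈ V 1)
    (h22 : mul e₂ e₂ = e₂) (h12 : mul e₁ e₂ = 0)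
    (h1f : mul e₁ f = (1 / 2 : F) • f) (h2f : mul e₂ f = β • f) (hf0 : f ≠ 0) :
    β * (2 * β - 1) = 0 := by
  have h := hJ.peirce_eigenvalue_smul_eq_zero he₁ he₂ hf h22 h12 h1f h2f
  rw [smul_eq_zero, mul_assoc] at h
  simpa using h.resolve_right hf0

theorem second_idempotent_eigenvalue (F : Type*) [Field F] [CharZero F] {J : Type*}
    [AddCommGroup J] [Module F J]
    (mul : J →ₗ[F] J →ₗ[F] J) (V : ZMod 2 → Submodule F J)
    (hJ : IsJordanSuperalgebra F mul V)
    (e₁ e₂ f : J) (β : F)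
    (he₁ : e₁ ∈ V 0) (he₂ : e₂ ∈ V 0) (hf : f ∈ V 1)
    (h11 : mul e₁ e₁ = e₁) (h22 : mul e₂ e₂ = e₂) (h12 : mul e₁ e₂ = 0)
    (h1f : mul e₁ f = (1 / 2 : F) • f) (h2f : mul e₂ f = β • f) (hf0 : f ≠ 0) :
    β * (2 * β - 1) = 0 :=
  second_idempotent_eigenvalue_general F mul V hJ e₁ e₂ f β he₁ he₂ hf h22 h12 h1f h2f hf0
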